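/- arXiv:1709.02572 — 2 statements merged into one kernel-verified Lean document; each statement's English description precedes it below -/
import Mathlib

section
/- Define a_μ^r(λ) by [∇(μ)] = Σ_λ a_μ^r(λ)[∇^{(p,r)}(λ)] in the basis {[∇^{(p,r)}(λ)]}. Assuming the bilinear-form identity ⟦T(2(p^r−1)ρ − λ₀* + p^r λ₁), L(ν) ⊗ ∇(σ)^{(r)}⟧ = [T(λ₁):∇(σ)]_∇ if ν = λ₀ and 0 otherwise (for ν, λ₀ ∈ X_r), one has the recursion a_μ^r(λ) = [T(2(p^r−1)ρ − λ₀* + p^r λ₁):∇(μ)]_∇ − Σ_{σ < λ₁} a_μ^r(λ₀ + p^r σ)[T(λ₁):∇(σ)]_∇, where λ = λ₀ + p^r λ₁ with λ₀ ∈ X_r. -/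
/-- Assuming the bilinear-form identity of Donkin's tilting conjecture
(axiomatized, with `tw λ₀ λ₁` standing for 2(pʳ−1)ρ − λ₀* + pʳλ₁, `t τ μ` for
[T(τ):∇(μ)]_∇ and `a μ λ` for a_μʳ(λ)), the coefficients in the (p,r)-basis satisfy
a_μʳ(λ₀ + pʳλ₁) = [T(tw λ₀ λ₁):∇(μ)]_∇ − ∑_{σ<λ₁} a_μʳ(λ₀+pʳσ)·[T(λ₁):∇(σ)]_∇. -/
theorem pr_coefficient_recursion {n : ℕ} {M : Type*} [AddCommGroup M]
    (p r : ℕ) (hp : 2 ≤ p) (hr : 1 ≤ r)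
    (dom : (Fin n → ℕ) → (Fin n → ℕ) → Prop)
    (hdomrefl : ∀ l, dom l l)
    (hdomantisymm : ∀ l μ, dom l μ → dom μ l → l = μ)
    (hfin : ∀ l, {σ : Fin n → ℕ | dom σ l}.Finite)
    (nabla nablapr Ttilt : (Fin n → ℕ) → M)
    (tw : (Fin n → ℕ) → (Fin n → ℕ) → (Fin n → ℕ))
    (a t : (Fin n → ℕ) → (Fin n → ℕ) → ℤ)
    (B : M →ₗ[ℤ] M →ₗ[ℤ] ℤ)
    (hindep : LinearIndependent ℤ nablapr)
    (hatri : ∀ μ l, ¬ dom l μ → a μ l = 0)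
    (hexp : ∀ μ, nabla μ = ∑ l ∈ (hfin μ).toFinset, a μ l • nablapr l)
    (hform : ∀ τ μ, B (Ttilt τ) (nabla μ) = t τ μ)
    (httri : ∀ τ σ, ¬ dom σ τ → t τ σ = 0)
    (htdiag : ∀ τ, t τ τ = 1)
    (hDonkin : ∀ l₀ ν : Fin n → ℕ, (∀ i, l₀ i < p ^ r) → (∀ i, ν i < p ^ r) →
      ∀ l₁ σ : Fin n → ℕ,
        B (Ttilt (tw l₀ l₁)) (nablapr (ν + p ^ r • σ)) =
          if ν = l₀ then t l₁ σ else 0)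
    (μ l₀ l₁ : Fin n → ℕ) (hl₀ : ∀ i, l₀ i < p ^ r) :
    a μ (l₀ + p ^ r • l₁) =
      t (tw l₀ l₁) μ -
        ∑ σ ∈ (hfin l₁).toFinset.filter (fun σ => σ ≠ l₁),
          a μ (l₀ + p ^ r • σ) * t l₁ σ := by
  classical
  have hq0 : 0 < p ^ r := pow_pos (by omega) r
  set q := p ^ r with hq
  set e : (Fin n → ℕ) → (Fin n → ℕ) := fun σ => l₀ + q • σ with he
  set f : (Fin n → ℕ) → ℤ := fun l =>
    if (fun i => l i % q) = l₀ then t l₁ (fun i => l i / q) else 0 with hf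
  set g : (Fin n → ℕ) → ℤ := fun l => a μ l * f l with hg
  set F : Finset (Fin n → ℕ) := (hfin μ).toFinset with hF
  set G : Finset (Fin n → ℕ) := (hfin l₁).toFinset with hG
  -- evaluate B on basis vectors
  have hB : ∀ l : Fin n → ℕ, B (Ttilt (tw l₀ l₁)) (nablapr l) = f l := by
    intro l
    have hdec : (fun i => l i % q) + q • (fun i => l i / q) = l := by
      funext i; simp [Nat.mod_add_div]
    have := hDonkin l₀ (fun i => l i % q) hl₀ (fun i => Nat.mod_lt _ hq0)
      l₁ (fun i => l i / q)
    rw [hdec] at this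
    exact this
  have key : t (tw l₀ l₁) μ = ∑ l ∈ F, g l := by
    rw [← hform, hexp μ, map_sum]
    refine Finset.sum_congr rfl fun l _ => ?_
    rw [map_zsmul, hB l, smul_eq_mul]
  -- compute g on the image of e
  have hge : ∀ σ : Fin n → ℕ, g (e σ) = a μ (e σ) * t l₁ σ := by
    intro σ
    have hmod : (fun i => e σ i % q) = l₀ := by
      funext i
      simp only [he, Pi.add_apply, Pi.smul_apply, smul_eq_mul]
      rw [Nat.add_mul_mod_self_left, Nat.mod_eq_of_lt (hl₀ i)]
    have hdiv : (fun i => e σ i / q) = σ := by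
      funext i
      simp only [he, Pi.add_apply, Pi.smul_apply, smul_eq_mul]
      rw [Nat.add_mul_div_left _ _ hq0, Nat.div_eq_of_lt (hl₀ i), zero_add]
    simp only [hg, hf, hmod, hdiv, if_pos rfl, if_true]
  have heinj : Function.Injective e := by
    intro σ σ' h
    funext i
    have := congrFun h i
    simp only [he, Pi.add_apply, Pi.smul_apply, smul_eq_mul] at this
    have h2 : q * σ i = q * σ' i := by omega
    exact Nat.eq_of_mul_eq_mul_left hq0 h2
  -- support of g lies in the image of G under e
  have hsupp : ∀ l, g l ≠ 0 → l ∈ G.image e := by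
    intro l hl
    have hfne : f l ≠ 0 := fun h => hl (by simp [hg, h])
    have hmod : (fun i => l i % q) = l₀ := by
      by_contra h; exact hfne (by simp [hf, h])
    have ht : t l₁ (fun i => l i / q) ≠ 0 := by
      intro h; exact hfne (by simp [hf, hmod, h])
    have hdom : dom (fun i => l i / q) l₁ := by
      by_contra h; exact ht (httri _ _ h)
    refine Finset.mem_image.2 ⟨(fun i => l i / q), ?_, ?_⟩
    · simp [hG, Set.Finite.mem_toFinset, hdom]
    · funext i
      simp only [he, Pi.add_apply, Pi.smul_apply, smul_eq_mul]
      have h1 : l i % q = l₀ i := congrFun hmod i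
      have h2 : l i % q + q * (l i / q) = l i := Nat.mod_add_div _ _
      omega
  have hvanF : ∀ l, l ∉ F → g l = 0 := by
    intro l hl
    have : ¬ dom l μ := by
      simpa [hF, Set.Finite.mem_toFinset] using hl
    simp [hg, hatri μ l this]
  -- reindex the sum
  have hsum : ∑ l ∈ F, g l = ∑ σ ∈ G, a μ (e σ) * t l₁ σ := by
    have h1 : ∑ l ∈ F, g l = ∑ l ∈ F ∪ G.image e, g l :=
      Finset.sum_subset Finset.subset_union_left (fun l _ hl => hvanF l hl)
    have h2 : ∑ l ∈ F ∪ G.image e, g l = ∑ l ∈ G.image e, g l := by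
      refine (Finset.sum_subset Finset.subset_union_right ?_).symm
      intro l _ hl
      by_contra h
      exact hl (hsupp l h)
    rw [h1, h2, Finset.sum_image (fun x _ y _ h => heinj h)]
    exact Finset.sum_congr rfl fun σ _ => hge σ
  -- split off σ = l₁
  have hl₁G : l₁ ∈ G := by simp [hG, Set.Finite.mem_toFinset, hdomrefl]
  have hsplit : ∑ σ ∈ G, a μ (e σ) * t l₁ σ =
      a μ (e l₁) * t l₁ l₁ + ∑ σ ∈ G.filter (fun σ => σ ≠ l₁), a μ (e σ) * t l₁ σ := by
    rw [← Finset.sum_filter_add_sum_filter_not G (fun σ => σ = l₁)]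
    congr 1
    rw [Finset.filter_eq', if_pos hl₁G, Finset.sum_singleton]
  have := key
  rw [hsum, hsplit, htdiag, mul_one] at this
  simp only [he] at this
  omega
end

section
/- Let p ≥ 2, r ≥ 1, and let μ = μ₀ + p^r μ₁ and σ = σ₀ + p^r σ₁ with μ₀, σ₀ ∈ X_r. If σ₀ ≠ μ₀ then μ ≠ σ; moreover if μ ≤ σ in the dominance order and σ₁, μ₁ are the p^r-adic quotients, then ⟨μ₁, α₀^∨⟩ ≤ ⟨σ₁, α₀^∨⟩ + (h−1) where h−1 = ⟨ρ, α₀^∨⟩, so the recursion on the quotients terminates: ⟨σ₁, α₀^∨⟩ < (⟨σ, α₀^∨⟩ + (h−1)(p^r−1))/p^r, strictly decreasing the pairing with α₀^∨ when ⟨σ, α₀^∨⟩ > h−1. -/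
/-- With `m i = ⟨ϖᵢ, α₀^∨⟩` (so `∑ m i = h − 1` and the pairing
`⟨λ, α₀^∨⟩ = ∑ m i · λ i`), and dominance μ ≤ σ expressed as σ − μ being a
nonnegative combination of positive roots `P b` (each pairing nonnegatively with
α₀^∨): distinct restricted parts give distinct weights; ⟨μ₁,α₀^∨⟩ ≤ ⟨σ₁,α₀^∨⟩+(h−1);
pʳ·⟨σ₁,α₀^∨⟩ < ⟨σ,α₀^∨⟩ + (h−1)(pʳ−1); and ⟨σ₁,α₀^∨⟩ < ⟨σ,α₀^∨⟩ when
⟨σ,α₀^∨⟩ > h−1, so the recursion terminates. -/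
theorem padic_quotient_bound {n : ℕ} (p r : ℕ) (hp : 2 ≤ p) (hr : 1 ≤ r)
    (m : Fin n → ℕ) (hH : 1 ≤ ∑ i, m i)
    {ι : Type*} (P : ι → Fin n → ℤ)
    (hP : ∀ b : ι, 0 ≤ ∑ i, (m i : ℤ) * P b i)
    (μ σ μ₀ μ₁ σ₀ σ₁ : Fin n → ℕ)
    (hμ : μ = μ₀ + p ^ r • μ₁) (hσ : σ = σ₀ + p ^ r • σ₁)
    (hμ₀ : ∀ i, μ₀ i < p ^ r) (hσ₀ : ∀ i, σ₀ i < p ^ r) :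
    (σ₀ ≠ μ₀ → μ ≠ σ) ∧
    ((∃ cs : ι →₀ ℕ,
        (fun i => (σ i : ℤ) - (μ i : ℤ)) = cs.sum fun b k => k • P b) →
      ∑ i, m i * μ₁ i ≤ (∑ i, m i * σ₁ i) + ∑ i, m i) ∧
    (p ^ r * ∑ i, m i * σ₁ i < (∑ i, m i * σ i) + (∑ i, m i) * (p ^ r - 1)) ∧
    ((∑ i, m i) < ∑ i, m i * σ i → ∑ i, m i * σ₁ i < ∑ i, m i * σ i) := by
  have hpr : 2 ≤ p ^ r := le_trans hp (Nat.le_self_pow (by omega) p)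
  -- sum decompositions
  have hsumμ : ∑ i, m i * μ i = ∑ i, m i * μ₀ i + p ^ r * ∑ i, m i * μ₁ i := by
    rw [hμ, Finset.mul_sum, ← Finset.sum_add_distrib]
    refine Finset.sum_congr rfl fun i _ => ?_
    simp only [Pi.add_apply, Pi.smul_apply, smul_eq_mul]
    ring
  have hsumσ : ∑ i, m i * σ i = ∑ i, m i * σ₀ i + p ^ r * ∑ i, m i * σ₁ i := by
    rw [hσ, Finset.mul_sum, ← Finset.sum_add_distrib]
    refine Finset.sum_congr rfl fun i _ => ?_
    simp only [Pi.add_apply, Pi.smul_apply, smul_eq_mul]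
    ring
  have hμ₀le : ∑ i, m i * μ₀ i ≤ (p ^ r - 1) * ∑ i, m i := by
    rw [Finset.mul_sum]
    refine Finset.sum_le_sum fun i _ => ?_
    rw [mul_comm (p ^ r - 1) (m i)]
    exact Nat.mul_le_mul_left _ (by have := hμ₀ i; omega)
  have hσ₀le : ∑ i, m i * σ₀ i ≤ (p ^ r - 1) * ∑ i, m i := by
    rw [Finset.mul_sum]
    refine Finset.sum_le_sum fun i _ => ?_
    rw [mul_comm (p ^ r - 1) (m i)]
    exact Nat.mul_le_mul_left _ (by have := hσ₀ i; omega)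
  refine ⟨?_, ?_, ?_, ?_⟩
  · -- distinct restricted parts give distinct weights
    intro hne heq
    apply hne
    funext i
    have h1 : μ i = μ₀ i + p ^ r * μ₁ i := by rw [hμ]; simp
    have h2 : σ i = σ₀ i + p ^ r * σ₁ i := by rw [hσ]; simp
    have hmod : (μ₀ i + p ^ r * μ₁ i) % p ^ r = (σ₀ i + p ^ r * σ₁ i) % p ^ r := by
      rw [← h1, ← h2, heq]
    rwa [Nat.add_mul_mod_self_left, Nat.add_mul_mod_self_left,
      Nat.mod_eq_of_lt (hμ₀ i), Nat.mod_eq_of_lt (hσ₀ i), eq_comm] at hmod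
  · -- dominance bound
    rintro ⟨cs, hcs⟩
    have hkey : (∑ i, (m i : ℤ) * μ i) ≤ ∑ i, (m i : ℤ) * σ i := by
      have hcs' : ∀ i, (σ i : ℤ) - (μ i : ℤ) =
          ∑ b ∈ cs.support, (cs b : ℤ) * P b i := by
        intro i
        have := congrFun hcs i
        simpa [Finsupp.sum, Finset.sum_apply] using this
      have hnn : 0 ≤ ∑ i, (m i : ℤ) * ((σ i : ℤ) - (μ i : ℤ)) := by
        calc (0 : ℤ) ≤ ∑ b ∈ cs.support, (cs b : ℤ) * ∑ i, (m i : ℤ) * P b i :=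
              Finset.sum_nonneg fun b _ =>
                mul_nonneg (Int.natCast_nonneg _) (hP b)
          _ = ∑ i, (m i : ℤ) * ((σ i : ℤ) - (μ i : ℤ)) := by
              simp only [hcs', Finset.mul_sum]
              rw [Finset.sum_comm]
              refine Finset.sum_congr rfl fun b _ => ?_
              refine Finset.sum_congr rfl fun i _ => by ring
      have := Finset.sum_sub_distrib (f := fun i => (m i : ℤ) * σ i)
        (g := fun i => (m i : ℤ) * μ i) (s := Finset.univ)
      nlinarith [hnn, Finset.sum_congr rfl
        (fun i (_ : i ∈ Finset.univ) => mul_sub (m i : ℤ) (σ i : ℤ) (μ i : ℤ))]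
    have hkeyN : ∑ i, m i * μ i ≤ ∑ i, m i * σ i := by
      have : ((∑ i, m i * μ i : ℕ) : ℤ) ≤ ((∑ i, m i * σ i : ℕ) : ℤ) := by
        push_cast; exact hkey
      exact_mod_cast this
    -- now: p^r * B ≤ C + p^r * D ≤ (p^r-1)M + p^r D < p^r (D + M)
    have h1 : p ^ r * ∑ i, m i * μ₁ i <
        p ^ r * ((∑ i, m i * σ₁ i) + ∑ i, m i) := by
      have hlt : (p ^ r - 1) * (∑ i, m i) < p ^ r * (∑ i, m i) :=
        Nat.mul_lt_mul_of_lt_of_le (by omega) (le_refl _) (by omega)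
      calc p ^ r * ∑ i, m i * μ₁ i ≤ ∑ i, m i * σ i := by omega
        _ ≤ (p ^ r - 1) * (∑ i, m i) + p ^ r * ∑ i, m i * σ₁ i := by omega
        _ < p ^ r * (∑ i, m i) + p ^ r * ∑ i, m i * σ₁ i := by omega
        _ = p ^ r * ((∑ i, m i * σ₁ i) + ∑ i, m i) := by ring
    exact le_of_lt (Nat.lt_of_mul_lt_mul_left h1)
  · -- p^r * D < S + M (p^r - 1)
    have : 1 ≤ (∑ i, m i) * (p ^ r - 1) :=
      Nat.one_le_iff_ne_zero.mpr (Nat.mul_ne_zero (by omega) (by omega))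
    omega
  · -- termination
    intro hM
    have h2 : 2 * (∑ i, m i * σ₁ i) ≤ p ^ r * ∑ i, m i * σ₁ i :=
      Nat.mul_le_mul_right _ hpr
    omega
end
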